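/- Let (N, G) ∈ R be moments of a nonnegative distribution g on S² (N = (1/4π)∫ g dω > 0, G_j = (1/4π)∫ g ℓ_j dω with |G| ≤ N), and let v ∈ ℝ³ with |v| < 1. Define f(ω) = g(ω)/(1 + vⁱℓ_i(ω)). Then f is nonnegative with positive mean, and its moments D = (1/4π)∫ f dω, I_j = (1/4π)∫ f ℓ_j dω satisfy D > 0, |I| ≤ D, as well as the conversion relations N = D + vⁱI_i and G_j = I_j + vⁱK_{ij} with K_{ij} = (1/4π)∫ f ℓ_i ℓ_j dω. -/

import Mathlib

open MeasureTheory Metric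

/-- The surface measure on the unit sphere in ℝ³ (induced by Lebesgue measure). -/
noncomputable def σS : Measure (sphere (0 : EuclideanSpace ℝ (Fin 3)) 1) :=
  (volume : Measure (EuclideanSpace ℝ (Fin 3))).toSphere

private lemma sphere_sum_sq (ω : sphere (0 : EuclideanSpace ℝ (Fin 3)) 1) :
    ∑ i, ((ω : EuclideanSpace ℝ (Fin 3)) i) ^ 2 = 1 := by
  have h : ‖(ω : EuclideanSpace ℝ (Fin 3))‖ = 1 := by
    simpa using mem_sphere_zero_iff_norm.mp ω.2
  have h2 := EuclideanSpace.norm_eq (ω : EuclideanSpace ℝ (Fin 3))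
  rw [h] at h2
  have h3 : Real.sqrt (∑ i, ‖(ω : EuclideanSpace ℝ (Fin 3)) i‖ ^ 2) = 1 := h2.symm
  rw [Real.sqrt_eq_one] at h3
  simpa [sq_abs] using h3

private lemma abs_sum_mul_le' (a b : Fin 3 → ℝ) :
    |∑ i, a i * b i| ≤ Real.sqrt (∑ i, a i ^ 2) * Real.sqrt (∑ i, b i ^ 2) := by
  rcases abs_cases (∑ i, a i * b i) with ⟨h, _⟩ | ⟨h, _⟩
  · rw [h]; exact Real.sum_mul_le_sqrt_mul_sqrt _ _ _
  · rw [h]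
    have := Real.sum_mul_le_sqrt_mul_sqrt Finset.univ (fun i => -a i) b
    simp only [neg_mul, Finset.sum_neg_distrib, neg_sq] at this
    linarith

private lemma coord_cont (i : Fin 3) :
    Continuous (fun ω : sphere (0 : EuclideanSpace ℝ (Fin 3)) 1 =>
      (ω : EuclideanSpace ℝ (Fin 3)) i) :=
  (EuclideanSpace.proj i).continuous.comp continuous_subtype_val

private lemma coord_bd (i : Fin 3) (ω : sphere (0 : EuclideanSpace ℝ (Fin 3)) 1) :
    |(ω : EuclideanSpace ℝ (Fin 3)) i| ≤ 1 := by
  have h1 : ((ω : EuclideanSpace ℝ (Fin 3)) i) ^ 2 ≤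
      ∑ j, ((ω : EuclideanSpace ℝ (Fin 3)) j) ^ 2 :=
    Finset.single_le_sum (f := fun j => ((ω : EuclideanSpace ℝ (Fin 3)) j) ^ 2)
      (fun j _ => sq_nonneg _) (Finset.mem_univ i)
  rw [sphere_sum_sq] at h1
  calc |(ω : EuclideanSpace ℝ (Fin 3)) i|
      = Real.sqrt (((ω : EuclideanSpace ℝ (Fin 3)) i) ^ 2) := (Real.sqrt_sq_eq_abs _).symm
    _ ≤ Real.sqrt 1 := Real.sqrt_le_sqrt h1
    _ = 1 := Real.sqrt_one

theorem stmt13 (g : sphere (0 : EuclideanSpace ℝ (Fin 3)) 1 → ℝ)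
    (hg_nonneg : ∀ ω, 0 ≤ g ω) (hg_int : Integrable g σS)
    (N : ℝ) (G : Fin 3 → ℝ)
    (hN : N = (1/(4*Real.pi)) * ∫ ω, g ω ∂σS)
    (hG : ∀ j, G j = (1/(4*Real.pi)) * ∫ ω, g ω * (ω : EuclideanSpace ℝ (Fin 3)) j ∂σS)
    (hNpos : 0 < N) (hGN : Real.sqrt (∑ j, G j ^ 2) ≤ N)
    (v : Fin 3 → ℝ) (hv : Real.sqrt (∑ i, v i ^ 2) < 1)
    (f : sphere (0 : EuclideanSpace ℝ (Fin 3)) 1 → ℝ)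
    (hf : ∀ ω, f ω = g ω / (1 + ∑ i, v i * (ω : EuclideanSpace ℝ (Fin 3)) i))
    (D : ℝ) (I : Fin 3 → ℝ) (K : Fin 3 → Fin 3 → ℝ)
    (hD : D = (1/(4*Real.pi)) * ∫ ω, f ω ∂σS)
    (hI : ∀ j, I j = (1/(4*Real.pi)) * ∫ ω, f ω * (ω : EuclideanSpace ℝ (Fin 3)) j ∂σS)
    (hK : ∀ i j, K i j = (1/(4*Real.pi)) *
        ∫ ω, f ω * (ω : EuclideanSpace ℝ (Fin 3)) i * (ω : EuclideanSpace ℝ (Fin 3)) j ∂σS) :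
    (∀ ω, 0 ≤ f ω) ∧ 0 < D ∧
    Real.sqrt (∑ j, I j ^ 2) ≤ D ∧
    N = D + ∑ i, v i * I i ∧
    ∀ j, G j = I j + ∑ i, v i * K i j := by
  have hnv0 : (0:ℝ) ≤ Real.sqrt (∑ i, v i ^ 2) := Real.sqrt_nonneg _
  have hden : ∀ ω : sphere (0 : EuclideanSpace ℝ (Fin 3)) 1,
      |∑ i, v i * (ω : EuclideanSpace ℝ (Fin 3)) i| ≤ Real.sqrt (∑ i, v i ^ 2) := by
    intro ω
    have := abs_sum_mul_le' v (fun i => (ω : EuclideanSpace ℝ (Fin 3)) i)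
    rwa [sphere_sum_sq, Real.sqrt_one, mul_one] at this
  have hdpos : ∀ ω : sphere (0 : EuclideanSpace ℝ (Fin 3)) 1,
      0 < 1 + ∑ i, v i * (ω : EuclideanSpace ℝ (Fin 3)) i := by
    intro ω; have := (abs_le.mp (hden ω)).1; linarith
  have hdle : ∀ ω : sphere (0 : EuclideanSpace ℝ (Fin 3)) 1,
      1 + ∑ i, v i * (ω : EuclideanSpace ℝ (Fin 3)) i ≤ 2 := by
    intro ω; have := (abs_le.mp (hden ω)).2; linarith
  have hdlow : ∀ ω : sphere (0 : EuclideanSpace ℝ (Fin 3)) 1,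
      1 - Real.sqrt (∑ i, v i ^ 2) ≤ 1 + ∑ i, v i * (ω : EuclideanSpace ℝ (Fin 3)) i := by
    intro ω; have := (abs_le.mp (hden ω)).1; linarith
  have hdcont : Continuous (fun ω : sphere (0 : EuclideanSpace ℝ (Fin 3)) 1 =>
      1 + ∑ i, v i * (ω : EuclideanSpace ℝ (Fin 3)) i) :=
    continuous_const.add (continuous_finset_sum _ fun i _ =>
      continuous_const.mul (coord_cont i))
  have hf_nonneg : ∀ ω, 0 ≤ f ω := fun ω => by
    rw [hf ω]; exact div_nonneg (hg_nonneg ω) (hdpos ω).le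
  have hf' : f = fun ω : sphere (0 : EuclideanSpace ℝ (Fin 3)) 1 =>
      (1 + ∑ i, v i * (ω : EuclideanSpace ℝ (Fin 3)) i)⁻¹ * g ω := by
    funext ω; rw [hf ω, div_eq_mul_inv, mul_comm]
  have hfint : Integrable f σS := by
    rw [hf']
    refine hg_int.bdd_mul (hdcont.inv₀ fun ω => (hdpos ω).ne').aestronglyMeasurable
      (c := (1 - Real.sqrt (∑ i, v i ^ 2))⁻¹) (ae_of_all _ fun ω => ?_)
    rw [Real.norm_eq_abs, abs_of_pos (inv_pos.mpr (hdpos ω))]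
    exact inv_anti₀ (by linarith) (hdlow ω)
  have hint1 : ∀ i, Integrable
      (fun ω => f ω * (ω : EuclideanSpace ℝ (Fin 3)) i) σS := by
    intro i
    have := hfint.bdd_mul (coord_cont i).aestronglyMeasurable
      (c := 1) (ae_of_all _ fun ω => by rw [Real.norm_eq_abs]; exact coord_bd i ω)
    exact this.congr (ae_of_all _ fun ω => mul_comm _ _)
  have hint2 : ∀ i j, Integrable (fun ω => f ω * (ω : EuclideanSpace ℝ (Fin 3)) i *
      (ω : EuclideanSpace ℝ (Fin 3)) j) σS := by
    intro i j
    have := (hint1 i).bdd_mul (coord_cont j).aestronglyMeasurable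
      (c := 1) (ae_of_all _ fun ω => by rw [Real.norm_eq_abs]; exact coord_bd j ω)
    exact this.congr (ae_of_all _ fun ω => by ring)
  have hgf : ∀ ω, g ω = f ω * (1 + ∑ i, v i * (ω : EuclideanSpace ℝ (Fin 3)) i) := by
    intro ω
    rw [hf ω]
    exact (div_mul_cancel₀ _ (hdpos ω).ne').symm
  have hc : (0:ℝ) < 1/(4*Real.pi) := by positivity
  have hintg_pos : 0 < ∫ ω, g ω ∂σS := by
    by_contra h
    push_neg at h
    rw [hN] at hNpos
    nlinarith
  have hintf_pos : 0 < ∫ ω, f ω ∂σS := by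
    have hmono : ∀ ω, g ω / 2 ≤ f ω := by
      intro ω
      rw [hf ω]
      exact div_le_div_of_nonneg_left (hg_nonneg ω) (hdpos ω) (hdle ω)
    have := integral_mono (hg_int.div_const 2) hfint hmono
    rw [integral_div] at this
    linarith
  have hDpos : 0 < D := by rw [hD]; exact mul_pos hc hintf_pos
  have hsum_int : Integrable
      (fun ω => ∑ i, v i * (f ω * (ω : EuclideanSpace ℝ (Fin 3)) i)) σS :=
    integrable_finset_sum _ fun i _ => (hint1 i).const_mul (v i)
  have hNconv : N = D + ∑ i, v i * I i := by
    have hptw : ∀ ω, g ω = f ω + ∑ i, v i * (f ω * (ω : EuclideanSpace ℝ (Fin 3)) i) := by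
      intro ω
      rw [hgf ω, mul_add, mul_one, Finset.mul_sum]
      congr 1
      exact Finset.sum_congr rfl fun i _ => by ring
    have hint_eq : ∫ ω, g ω ∂σS = (∫ ω, f ω ∂σS) +
        ∑ i, v i * ∫ ω, f ω * (ω : EuclideanSpace ℝ (Fin 3)) i ∂σS := by
      calc ∫ ω, g ω ∂σS
          = ∫ ω, (f ω + ∑ i, v i * (f ω * (ω : EuclideanSpace ℝ (Fin 3)) i)) ∂σS :=
            integral_congr_ae (ae_of_all _ hptw)
        _ = (∫ ω, f ω ∂σS) +
              ∫ ω, ∑ i, v i * (f ω * (ω : EuclideanSpace ℝ (Fin 3)) i) ∂σS :=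
            integral_add hfint hsum_int
        _ = (∫ ω, f ω ∂σS) +
              ∑ i, ∫ ω, v i * (f ω * (ω : EuclideanSpace ℝ (Fin 3)) i) ∂σS := by
            rw [integral_finset_sum _ fun i _ => (hint1 i).const_mul (v i)]
        _ = (∫ ω, f ω ∂σS) +
              ∑ i, v i * ∫ ω, f ω * (ω : EuclideanSpace ℝ (Fin 3)) i ∂σS := by
            simp_rw [integral_const_mul]
    rw [hN, hint_eq, mul_add, hD, Finset.mul_sum]
    congr 1
    refine Finset.sum_congr rfl fun i _ => ?_
    rw [hI i]
    ring
  have hGconv : ∀ j, G j = I j + ∑ i, v i * K i j := by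
    intro j
    have hptw : ∀ ω, g ω * (ω : EuclideanSpace ℝ (Fin 3)) j =
        f ω * (ω : EuclideanSpace ℝ (Fin 3)) j +
        ∑ i, v i * (f ω * (ω : EuclideanSpace ℝ (Fin 3)) i *
          (ω : EuclideanSpace ℝ (Fin 3)) j) := by
      intro ω
      rw [hgf ω, mul_add, mul_one, add_mul]
      congr 1
      rw [Finset.mul_sum, Finset.sum_mul]
      exact Finset.sum_congr rfl fun i _ => by ring
    have hsum_int2 : Integrable (fun ω => ∑ i, v i *
        (f ω * (ω : EuclideanSpace ℝ (Fin 3)) i * (ω : EuclideanSpace ℝ (Fin 3)) j)) σS :=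
      integrable_finset_sum _ fun i _ => (hint2 i j).const_mul (v i)
    have hint_eq : ∫ ω, g ω * (ω : EuclideanSpace ℝ (Fin 3)) j ∂σS =
        (∫ ω, f ω * (ω : EuclideanSpace ℝ (Fin 3)) j ∂σS) +
        ∑ i, v i * ∫ ω, f ω * (ω : EuclideanSpace ℝ (Fin 3)) i *
          (ω : EuclideanSpace ℝ (Fin 3)) j ∂σS := by
      calc ∫ ω, g ω * (ω : EuclideanSpace ℝ (Fin 3)) j ∂σS
          = ∫ ω, (f ω * (ω : EuclideanSpace ℝ (Fin 3)) j +
              ∑ i, v i * (f ω * (ω : EuclideanSpace ℝ (Fin 3)) i *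
                (ω : EuclideanSpace ℝ (Fin 3)) j)) ∂σS :=
            integral_congr_ae (ae_of_all _ hptw)
        _ = (∫ ω, f ω * (ω : EuclideanSpace ℝ (Fin 3)) j ∂σS) +
              ∫ ω, ∑ i, v i * (f ω * (ω : EuclideanSpace ℝ (Fin 3)) i *
                (ω : EuclideanSpace ℝ (Fin 3)) j) ∂σS :=
            integral_add (hint1 j) hsum_int2
        _ = (∫ ω, f ω * (ω : EuclideanSpace ℝ (Fin 3)) j ∂σS) +
              ∑ i, ∫ ω, v i * (f ω * (ω : EuclideanSpace ℝ (Fin 3)) i *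
                (ω : EuclideanSpace ℝ (Fin 3)) j) ∂σS := by
            rw [integral_finset_sum _ fun i _ => (hint2 i j).const_mul (v i)]
        _ = (∫ ω, f ω * (ω : EuclideanSpace ℝ (Fin 3)) j ∂σS) +
              ∑ i, v i * ∫ ω, f ω * (ω : EuclideanSpace ℝ (Fin 3)) i *
                (ω : EuclideanSpace ℝ (Fin 3)) j ∂σS := by
            simp_rw [integral_const_mul]
    rw [hG j, hint_eq, mul_add, hI j, Finset.mul_sum]
    congr 1
    refine Finset.sum_congr rfl fun i _ => ?_
    rw [hK i j]
    ring
  have hIbd : Real.sqrt (∑ j, I j ^ 2) ≤ D := by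
    have hsI0 : (0:ℝ) ≤ ∑ j, I j ^ 2 := Finset.sum_nonneg fun j _ => sq_nonneg _
    have ht0 : (0:ℝ) ≤ Real.sqrt (∑ j, I j ^ 2) := Real.sqrt_nonneg _
    have htsq : (Real.sqrt (∑ j, I j ^ 2)) ^ 2 = ∑ j, I j ^ 2 := Real.sq_sqrt hsI0
    have hptw : ∀ ω, ∑ j, I j * (f ω * (ω : EuclideanSpace ℝ (Fin 3)) j) ≤
        f ω * Real.sqrt (∑ j, I j ^ 2) := by
      intro ω
      have h1 : |∑ j, I j * (ω : EuclideanSpace ℝ (Fin 3)) j| ≤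
          Real.sqrt (∑ j, I j ^ 2) := by
        have := abs_sum_mul_le' I (fun j => (ω : EuclideanSpace ℝ (Fin 3)) j)
        rwa [sphere_sum_sq, Real.sqrt_one, mul_one] at this
      have h2 : ∑ j, I j * (f ω * (ω : EuclideanSpace ℝ (Fin 3)) j) =
          f ω * ∑ j, I j * (ω : EuclideanSpace ℝ (Fin 3)) j := by
        rw [Finset.mul_sum]
        exact Finset.sum_congr rfl fun j _ => by ring
      rw [h2]
      exact mul_le_mul_of_nonneg_left ((le_abs_self _).trans h1) (hf_nonneg ω)
    have hkey : ∑ j, I j ^ 2 ≤ D * Real.sqrt (∑ j, I j ^ 2) := by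
      have e1 : ∑ j, I j ^ 2 = (1/(4*Real.pi)) *
          ∑ j, I j * ∫ ω, f ω * (ω : EuclideanSpace ℝ (Fin 3)) j ∂σS := by
        rw [Finset.mul_sum]
        refine Finset.sum_congr rfl fun j _ => ?_
        rw [sq, hI j]
        ring
      have e2 : ∑ j, I j * ∫ ω, f ω * (ω : EuclideanSpace ℝ (Fin 3)) j ∂σS =
          ∫ ω, ∑ j, I j * (f ω * (ω : EuclideanSpace ℝ (Fin 3)) j) ∂σS := by
        rw [integral_finset_sum _ fun j _ => (hint1 j).const_mul (I j)]
        simp_rw [integral_const_mul]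
      have e3 : ∫ ω, ∑ j, I j * (f ω * (ω : EuclideanSpace ℝ (Fin 3)) j) ∂σS ≤
          ∫ ω, f ω * Real.sqrt (∑ j, I j ^ 2) ∂σS :=
        integral_mono (integrable_finset_sum _ fun j _ => (hint1 j).const_mul (I j))
          (hfint.mul_const _) hptw
      have e4 : ∫ ω, f ω * Real.sqrt (∑ j, I j ^ 2) ∂σS =
          (∫ ω, f ω ∂σS) * Real.sqrt (∑ j, I j ^ 2) := integral_mul_const _ f
      calc ∑ j, I j ^ 2
          = (1/(4*Real.pi)) * ∑ j, I j * ∫ ω, f ω * (ω : EuclideanSpace ℝ (Fin 3)) j ∂σS := e1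
        _ = (1/(4*Real.pi)) * ∫ ω, ∑ j, I j * (f ω * (ω : EuclideanSpace ℝ (Fin 3)) j) ∂σS := by
            rw [e2]
        _ ≤ (1/(4*Real.pi)) * ((∫ ω, f ω ∂σS) * Real.sqrt (∑ j, I j ^ 2)) := by
            rw [← e4]; exact mul_le_mul_of_nonneg_left e3 hc.le
        _ = D * Real.sqrt (∑ j, I j ^ 2) := by rw [hD]; ring
    nlinarith [htsq, hkey, ht0, hDpos]
  exact ⟨hf_nonneg, hDpos, hIbd, hNconv, hGconv⟩
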